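/- Let X and Y be smooth manifolds and f: Y → X a smooth map, and let f•: C^∞(X; ℂ) → C^∞(Y; ℂ), g ↦ g ∘ f, be the induced unital ℂ-algebra homomorphism. Suppose that for every pair of unital ℂ-algebra homomorphisms ψ, ψ': C^∞(Y; ℂ) → ℂ the equality ψ ∘ f• = ψ' ∘ f• implies ψ = ψ'. Then f is injective. -/

import Mathlib

open scoped Manifold

/-- `ℂ` is a smooth ring over `ℝ` (with its canonical model `𝓘(ℝ, ℂ)`). -/
instance : ContMDiffRing 𝓘(ℝ, ℂ) (⊤ : ℕ∞) ℂ where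
  contMDiff_add := by
    rw [contMDiff_iff]
    refine ⟨continuous_add, fun x y => ?_⟩
    simp only [chartAt_self_eq, mfld_simps]
    rw [contDiffOn_univ]
    exact contDiff_fst.add contDiff_snd
  contMDiff_mul := by
    rw [contMDiff_iff]
    refine ⟨continuous_mul, fun x y => ?_⟩
    simp only [chartAt_self_eq, mfld_simps]
    rw [contDiffOn_univ]
    exact contDiff_fst.mul contDiff_snd

/-- The algebra `C^∞(M; ℂ)` of smooth complex-valued functions on a smooth manifold `M`
is a `ℂ`-algebra, with `ℂ` acting by constant functions. -/
noncomputable instance smoothFunctionsComplexAlgebra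
    {n : ℕ} (M : Type) [TopologicalSpace M]
    [ChartedSpace (EuclideanSpace ℝ (Fin n)) M] [IsManifold (𝓡 n) (⊤ : ℕ∞) M] :
    Algebra ℂ C^(⊤ : ℕ∞)⟮𝓡 n, M; 𝓘(ℝ, ℂ), ℂ⟯ :=
  RingHom.toAlgebra
    { toFun := fun c => ContMDiffMap.const c
      map_one' := rfl
      map_mul' := fun _ _ => rfl
      map_zero' := rfl
      map_add' := fun _ _ => rfl }

/-- The pullback homomorphism `f• : C^∞(X; ℂ) → C^∞(Y; ℂ)`, `g ↦ g ∘ f`, induced by a smooth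
map `f : Y → X` (bundled here as `F`). It is a unital `ℂ`-algebra homomorphism. -/
noncomputable def smoothPullback {m n : ℕ}
    (X : Type) [TopologicalSpace X]
    [ChartedSpace (EuclideanSpace ℝ (Fin m)) X] [IsManifold (𝓡 m) (⊤ : ℕ∞) X]
    (Y : Type) [TopologicalSpace Y]
    [ChartedSpace (EuclideanSpace ℝ (Fin n)) Y] [IsManifold (𝓡 n) (⊤ : ℕ∞) Y]
    (F : C^(⊤ : ℕ∞)⟮𝓡 n, Y; 𝓡 m, X⟯) :
    C^(⊤ : ℕ∞)⟮𝓡 m, X; 𝓘(ℝ, ℂ), ℂ⟯ →ₐ[ℂ] C^(⊤ : ℕ∞)⟮𝓡 n, Y; 𝓘(ℝ, ℂ), ℂ⟯ where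
  toFun g := g.comp F
  map_one' := rfl
  map_mul' _ _ := rfl
  map_zero' := rfl
  map_add' _ _ := rfl
  commutes' _ := rfl

noncomputable def evalAlgHom {n : ℕ} (M : Type) [TopologicalSpace M]
    [ChartedSpace (EuclideanSpace ℝ (Fin n)) M] [IsManifold (𝓡 n) (⊤ : ℕ∞) M]
    (y : M) : C^(⊤ : ℕ∞)⟮𝓡 n, M; 𝓘(ℝ, ℂ), ℂ⟯ →ₐ[ℂ] ℂ :=
  { ContMDiffMap.evalRingHom y with commutes' := fun _ => rfl }

theorem evalAlgHom_comp_smoothPullback {m n : ℕ}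
    {X : Type} [TopologicalSpace X]
    [ChartedSpace (EuclideanSpace ℝ (Fin m)) X] [IsManifold (𝓡 m) (⊤ : ℕ∞) X]
    {Y : Type} [TopologicalSpace Y]
    [ChartedSpace (EuclideanSpace ℝ (Fin n)) Y] [IsManifold (𝓡 n) (⊤ : ℕ∞) Y]
    (F : C^(⊤ : ℕ∞)⟮𝓡 n, Y; 𝓡 m, X⟯) (y : Y) :
    (evalAlgHom Y y).comp (smoothPullback X Y F) = evalAlgHom X (F y) :=
  rfl

/-- Smooth functions separate the points of a Hausdorff σ-compact manifold. -/
theorem evalAlgHom_injective {n : ℕ} (M : Type) [TopologicalSpace M] [T2Space M]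
    [SigmaCompactSpace M]
    [ChartedSpace (EuclideanSpace ℝ (Fin n)) M] [IsManifold (𝓡 n) (⊤ : ℕ∞) M] :
    Function.Injective (evalAlgHom (n := n) M) := by
  intro y₁ y₂ h
  by_contra hne
  obtain ⟨g, hg₁, hg₂, -⟩ := exists_contMDiffMap_zero_one_of_isClosed (n := (⊤ : ℕ∞)) (𝓡 n)
    isClosed_singleton isClosed_singleton (Set.disjoint_singleton.2 hne)
  let gℂ : C^(⊤ : ℕ∞)⟮𝓡 n, M; 𝓘(ℝ, ℂ), ℂ⟯ :=
    ⟨fun y => (g y : ℂ), Complex.ofRealCLM.contDiff.contMDiff.comp g.contMDiff⟩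
  have h_eval : (g y₁ : ℂ) = g y₂ := DFunLike.congr_fun h gℂ
  rw [hg₁ rfl, hg₂ rfl] at h_eval
  norm_num at h_eval

theorem stmt_5_general {m n : ℕ}
    (X : Type) [TopologicalSpace X]
    [ChartedSpace (EuclideanSpace ℝ (Fin m)) X] [IsManifold (𝓡 m) (⊤ : ℕ∞) X]
    (Y : Type) [TopologicalSpace Y] [T2Space Y] [SecondCountableTopology Y]
    [ChartedSpace (EuclideanSpace ℝ (Fin n)) Y] [IsManifold (𝓡 n) (⊤ : ℕ∞) Y]
    (f : Y → X) (hf : ContMDiff (𝓡 n) (𝓡 m) (⊤ : ℕ∞) f)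
    (hepi : ∀ ψ ψ' : C^(⊤ : ℕ∞)⟮𝓡 n, Y; 𝓘(ℝ, ℂ), ℂ⟯ →ₐ[ℂ] ℂ,
      ψ.comp (smoothPullback X Y ⟨f, hf⟩) = ψ'.comp (smoothPullback X Y ⟨f, hf⟩) → ψ = ψ') :
    Function.Injective f := by
  intro y₁ y₂ h
  have := ChartedSpace.locallyCompactSpace (EuclideanSpace ℝ (Fin n)) Y
  apply evalAlgHom_injective (n := n) Y
  apply hepi
  calc _ = evalAlgHom X (f y₁) := evalAlgHom_comp_smoothPullback ⟨f, hf⟩ y₁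
    _ = evalAlgHom X (f y₂) := by rw [h]
    _ = _ := (evalAlgHom_comp_smoothPullback ⟨f, hf⟩ y₂).symm

/-- Let `X` and `Y` be smooth manifolds and `f : Y → X` a smooth map, and let
`f• : C^∞(X; ℂ) → C^∞(Y; ℂ)`, `g ↦ g ∘ f`, be the induced unital `ℂ`-algebra homomorphism.
If for every pair of unital `ℂ`-algebra homomorphisms `ψ, ψ' : C^∞(Y; ℂ) → ℂ` the equality
`ψ ∘ f• = ψ' ∘ f•` implies `ψ = ψ'`, then `f` is injective. -/
theorem stmt_5 {m n : ℕ}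
    (X : Type) [TopologicalSpace X] [T2Space X] [SecondCountableTopology X]
    [ChartedSpace (EuclideanSpace ℝ (Fin m)) X] [IsManifold (𝓡 m) (⊤ : ℕ∞) X]
    (Y : Type) [TopologicalSpace Y] [T2Space Y] [SecondCountableTopology Y]
    [ChartedSpace (EuclideanSpace ℝ (Fin n)) Y] [IsManifold (𝓡 n) (⊤ : ℕ∞) Y]
    (f : Y → X) (hf : ContMDiff (𝓡 n) (𝓡 m) (⊤ : ℕ∞) f)
    (hepi : ∀ ψ ψ' : C^(⊤ : ℕ∞)⟮𝓡 n, Y; 𝓘(ℝ, ℂ), ℂ⟯ →ₐ[ℂ] ℂ,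
      ψ.comp (smoothPullback X Y ⟨f, hf⟩) = ψ'.comp (smoothPullback X Y ⟨f, hf⟩) → ψ = ψ') :
    Function.Injective f :=
  stmt_5_general X Y f hf hepi
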